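/- arXiv:math/0506204 — 3 statements merged into one kernel-verified Lean document; each statement's English description precedes it below -/
import Mathlib

section
/- Let ε > 0, let (x_j)_{j≥0} be points of ℝ, and for each j ≥ 1 let h_j be a map that is C¹ with positive derivative on U_ε(x_{j−1}) and satisfies h_j(x_{j−1}) = x_j. Assume the family (h_j) is uniformly C¹-bounded with uniformly equicontinuous log-derivatives. Suppose that limsup_{n→∞} (1/n)·log F_n′(x_0) = λ for some λ < 0, and let α be any real with 0 < α < −λ. Then there exist ε₁ > 0 and C > 0 such that for every closed interval J with x_0 ∈ J and diam(J) < ε₁, and for every n ≥ 0: the composition F_n is defined on J (that is, F_j(J) ⊆ U_ε(x_j) for every 0 ≤ j < n, so each successive map h_{j+1} can be applied), and diam(F_n(J)) ≤ C·e^{−α n}·diam(J). -/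
open Filter Finset

/-- **Contraction Lemma** (Deroin–Kleptsyn, Lemma 2.2).
Points `x j` in `ℝ`, maps `h j` that are `C¹` with positive derivative on the
`ε`-neighborhood `U_ε(x j) = Metric.ball (x j) ε` and send `x j` to `x (j+1)`.
The compositions are `F 0 = id`, `F (n+1) = h n ∘ F n`, so that
`(F n)'(x 0) = ∏_{j<n} (h j)'(x j)`.  The family is uniformly `C¹`-bounded
(`1/K ≤ h_j' ≤ K`) with uniformly equicontinuous log-derivatives.  If
`limsup (1/n) log (F n)'(x 0) = λ < 0` and `0 < α < -λ`, then there are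
`ε₁ > 0` and `C > 0` such that any closed interval `J ∋ x 0` of diameter `< ε₁`
stays in the domains of all the compositions and
`diam (F n '' J) ≤ C · e^{-α n} · diam J`. -/
theorem contraction_lemma
    (ε : ℝ) (hε : 0 < ε) (x : ℕ → ℝ) (h : ℕ → ℝ → ℝ)
    (F : ℕ → ℝ → ℝ)
    (hF0 : ∀ y, F 0 y = y)
    (hFs : ∀ n y, F (n + 1) y = h n (F n y))
    (hC1 : ∀ j, ContDiffOn ℝ 1 (h j) (Metric.ball (x j) ε))
    (hpos : ∀ j, ∀ y ∈ Metric.ball (x j) ε, 0 < deriv (h j) y)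
    (hmap : ∀ j, h j (x j) = x (j + 1))
    (K : ℝ) (hK : 1 ≤ K)
    (hbd : ∀ j, ∀ y ∈ Metric.ball (x j) ε,
      1 / K ≤ deriv (h j) y ∧ deriv (h j) y ≤ K)
    (hequi : ∀ δ > (0 : ℝ), ∃ ρ > (0 : ℝ), ∀ j,
      ∀ y ∈ Metric.ball (x j) ε, ∀ z ∈ Metric.ball (x j) ε,
        |y - z| < ρ → deriv (h j) y ≤ Real.exp δ * deriv (h j) z)
    (lam : ℝ) (hlam : lam < 0)
    (hlimsup : Filter.limsup
      (fun n : ℕ => (1 / (n : ℝ)) *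
        Real.log (∏ j ∈ Finset.range n, deriv (h j) (x j))) Filter.atTop = lam)
    (α : ℝ) (hα0 : 0 < α) (hαlam : α < -lam) :
    ∃ ε₁ > (0 : ℝ), ∃ C > (0 : ℝ), ∀ a b : ℝ,
      x 0 ∈ Set.Icc a b → b - a < ε₁ →
      ∀ n : ℕ,
        (∀ j < n, F j '' Set.Icc a b ⊆ Metric.ball (x j) ε) ∧
        Metric.diam (F n '' Set.Icc a b) ≤ C * Real.exp (-α * n) * (b - a) := by
  classical
  set P : ℕ → ℝ := fun n => ∏ j ∈ Finset.range n, deriv (h j) (x j) with hP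
  have hxball : ∀ j, x j ∈ Metric.ball (x j) ε := fun j => Metric.mem_ball_self hε
  have hK0 : (0:ℝ) < K := lt_of_lt_of_le one_pos hK
  have hd_pos : ∀ j, 0 < deriv (h j) (x j) := fun j => hpos j _ (hxball j)
  have hd_le : ∀ j, deriv (h j) (x j) ≤ K := fun j => (hbd j _ (hxball j)).2
  have hP_pos : ∀ n, 0 < P n := fun n => Finset.prod_pos (fun j _ => hd_pos j)
  have hP_le_pow : ∀ n, P n ≤ K ^ n := by
    intro n
    calc P n ≤ ∏ _j ∈ Finset.range n, K :=
          Finset.prod_le_prod (fun j _ => (hd_pos j).le) (fun j _ => hd_le j)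
      _ = K ^ n := by simp
  set β := (α - lam) / 2 with hβ
  have hβα : α < β := by rw [hβ]; linarith
  have hβlam : β < -lam := by rw [hβ]; linarith
  have hβ0 : 0 < β := lt_trans hα0 hβα
  set δ := β - α with hδdef
  have hδ0 : 0 < δ := by rw [hδdef]; linarith
  obtain ⟨ρ, hρ0, hρ⟩ := hequi δ hδ0
  set r := min ε ρ with hrdef
  have hr0 : 0 < r := lt_min hε hρ0
  -- the limsup gives an eventual exponential bound on the products
  have hbdabove : Filter.IsBoundedUnder (· ≤ ·) Filter.atTop
      (fun n : ℕ => (1 / (n : ℝ)) * Real.log (P n)) := by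
    apply Filter.isBoundedUnder_of
    refine ⟨Real.log K, fun n => ?_⟩
    rcases Nat.eq_zero_or_pos n with rfl | hn
    · simpa [hP] using Real.log_nonneg hK
    · have hn0 : (0:ℝ) < n := by exact_mod_cast hn
      have hlog : Real.log (P n) ≤ n * Real.log K := by
        have := Real.log_le_log (hP_pos n) (hP_le_pow n)
        rwa [Real.log_pow] at this
      have : (1 / (n:ℝ)) * Real.log (P n) ≤ (1 / (n:ℝ)) * (n * Real.log K) :=
        mul_le_mul_of_nonneg_left hlog (by positivity)
      calc (1 / (n:ℝ)) * Real.log (P n) ≤ (1 / (n:ℝ)) * (n * Real.log K) := this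
        _ = Real.log K := by field_simp
  have hev : ∀ᶠ n : ℕ in Filter.atTop, (1 / (n : ℝ)) * Real.log (P n) < -β :=
    Filter.eventually_lt_of_limsup_lt (by rw [hlimsup]; linarith) hbdabove
  obtain ⟨N₀, hN₀⟩ := Filter.eventually_atTop.mp hev
  set N := max N₀ 1 with hNdef
  have hN1 : 1 ≤ N := le_max_right _ _
  have hPN : ∀ n, N ≤ n → P n ≤ Real.exp (-β * n) := by
    intro n hn
    have hn1 : 1 ≤ n := le_trans hN1 hn
    have hn0 : (0:ℝ) < n := by exact_mod_cast hn1
    have hu := hN₀ n (le_trans (le_max_left _ _) hn)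
    have hlog : Real.log (P n) < -β * n := by
      rw [one_div, inv_mul_eq_div, div_lt_iff₀ hn0] at hu
      linarith
    rw [← Real.exp_log (hP_pos n)]
    exact (Real.exp_lt_exp.mpr hlog).le
  set C₀ := max (K ^ N * Real.exp (β * N)) 1 with hC₀def
  have hC₀1 : (1:ℝ) ≤ C₀ := le_max_right _ _
  have hC₀0 : (0:ℝ) < C₀ := lt_of_lt_of_le one_pos hC₀1
  have hP_le : ∀ n, P n ≤ C₀ * Real.exp (-β * n) := by
    intro n
    by_cases hn : N ≤ n
    · exact (hPN n hn).trans (le_mul_of_one_le_left (Real.exp_pos _).le hC₀1)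
    · push_neg at hn
      have h2 : K ^ n ≤ K ^ N := pow_le_pow_right₀ hK hn.le
      have h3 : Real.exp (β * n) ≤ Real.exp (β * N) := by
        apply Real.exp_le_exp.mpr
        have : (n:ℝ) ≤ N := by exact_mod_cast hn.le
        nlinarith
      have h4 : P n * Real.exp (β * n) ≤ K ^ N * Real.exp (β * N) :=
        mul_le_mul ((hP_le_pow n).trans h2) h3 (Real.exp_pos _).le
          (pow_nonneg hK0.le N)
      have h5 : P n * Real.exp (β * n) ≤ C₀ := h4.trans (le_max_left _ _)
      have := (le_div_iff₀ (Real.exp_pos (β * n))).mpr h5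
      rwa [neg_mul, Real.exp_neg, ← div_eq_mul_inv]
  have hcoef : ∀ j : ℕ, Real.exp (δ * j) * P j ≤ C₀ * Real.exp (-α * j) := by
    intro j
    have hδβ : δ - β = -α := by rw [hδdef]; ring
    calc Real.exp (δ * j) * P j
        ≤ Real.exp (δ * j) * (C₀ * Real.exp (-β * j)) :=
          mul_le_mul_of_nonneg_left (hP_le j) (Real.exp_pos _).le
      _ = C₀ * (Real.exp (δ * j) * Real.exp (-β * j)) := by ring
      _ = C₀ * Real.exp (-α * j) := by
          rw [← Real.exp_add]
          have hj : δ * (j:ℝ) + -β * j = -α * j := by rw [hδdef]; ring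
          rw [hj]
  have hexp_le_one : ∀ j : ℕ, Real.exp (-α * j) ≤ 1 := by
    intro j
    apply Real.exp_le_one_iff.mpr
    rw [neg_mul]
    exact neg_nonpos.mpr (by positivity)
  have hcoef' : ∀ j : ℕ, Real.exp (δ * j) * P j ≤ C₀ := fun j =>
    (hcoef j).trans (by
      calc C₀ * Real.exp (-α * j) ≤ C₀ * 1 :=
            mul_le_mul_of_nonneg_left (hexp_le_one j) hC₀0.le
        _ = C₀ := mul_one _)
  refine ⟨r / C₀, div_pos hr0 hC₀0, 2 * C₀, by positivity, fun a b hx hab n => ?_⟩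
  have hba0 : 0 ≤ b - a := by
    have h1 := hx.1; have h2 := hx.2; linarith
  have step_small : ∀ (j : ℕ) (t : ℝ),
      |t| ≤ Real.exp (δ * j) * P j * (b - a) → |t| < r := by
    intro j t ht
    have h1 : Real.exp (δ * j) * P j * (b - a) ≤ C₀ * (b - a) :=
      mul_le_mul_of_nonneg_right (hcoef' j) hba0
    have h2 : C₀ * (b - a) < C₀ * (r / C₀) := mul_lt_mul_of_pos_left hab hC₀0
    have h3 : C₀ * (r / C₀) = r := by field_simp
    linarith
  have key : ∀ y ∈ Set.Icc a b, ∀ j : ℕ,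
      |F j y - x j| ≤ Real.exp (δ * j) * P j * (b - a) := by
    intro y hy j
    induction j with
    | zero =>
        rw [hF0]
        have : |y - x 0| ≤ b - a := by
          rw [abs_sub_le_iff]
          exact ⟨by linarith [hy.2, hx.1], by linarith [hy.1, hx.2]⟩
        simpa [hP] using this
    | succ j ih =>
        have hmem : F j y ∈ Metric.ball (x j) r := by
          rw [Metric.mem_ball, Real.dist_eq]
          exact step_small j _ ih
        have hsub : Metric.ball (x j) r ⊆ Metric.ball (x j) ε :=
          Metric.ball_subset_ball (min_le_left _ _)
        have hdiff : ∀ z ∈ Metric.ball (x j) r, DifferentiableAt ℝ (h j) z := by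
          intro z hz
          exact ((hC1 j).differentiableOn one_ne_zero).differentiableAt
            (Metric.isOpen_ball.mem_nhds (hsub hz))
        have hbound : ∀ z ∈ Metric.ball (x j) r,
            ‖deriv (h j) z‖ ≤ Real.exp δ * deriv (h j) (x j) := by
          intro z hz
          have hzε : z ∈ Metric.ball (x j) ε := hsub hz
          have hzρ : |z - x j| < ρ := by
            have : dist z (x j) < r := hz
            rw [Real.dist_eq] at this
            exact lt_of_lt_of_le this (min_le_right ε ρ)
          rw [Real.norm_eq_abs, abs_of_pos (hpos j z hzε)]
          exact hρ j z hzε (x j) (hxball j) hzρ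
        have hmvt := (convex_ball (x j) r).norm_image_sub_le_of_norm_deriv_le
          hdiff hbound (Metric.mem_ball_self hr0) hmem
        rw [Real.norm_eq_abs, Real.norm_eq_abs] at hmvt
        rw [hFs, ← hmap j]
        calc |h j (F j y) - h j (x j)|
            ≤ Real.exp δ * deriv (h j) (x j) * |F j y - x j| := hmvt
          _ ≤ Real.exp δ * deriv (h j) (x j) *
              (Real.exp (δ * j) * P j * (b - a)) := by
              exact mul_le_mul_of_nonneg_left ih
                (mul_nonneg (Real.exp_pos _).le (hd_pos j).le)
          _ = Real.exp (δ * (j + 1 : ℕ)) * P (j + 1) * (b - a) := by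
              simp only [hP, Finset.prod_range_succ, Nat.cast_succ]
              rw [mul_add, mul_one, Real.exp_add]
              ring
  have hkey' : ∀ y ∈ Set.Icc a b, ∀ j : ℕ,
      |F j y - x j| ≤ C₀ * Real.exp (-α * j) * (b - a) := fun y hy j =>
    (key y hy j).trans (mul_le_mul_of_nonneg_right (hcoef j) hba0)
  constructor
  · intro j _
    rintro _ ⟨y, hy, rfl⟩
    rw [Metric.mem_ball, Real.dist_eq]
    exact lt_of_lt_of_le (step_small j _ (key y hy j)) (min_le_left _ _)
  · apply Metric.diam_le_of_forall_dist_le (by positivity)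
    rintro _ ⟨y, hy, rfl⟩ _ ⟨z, hz, rfl⟩
    calc dist (F n y) (F n z)
        ≤ dist (F n y) (x n) + dist (F n z) (x n) := dist_triangle_right _ _ _
      _ = |F n y - x n| + |F n z - x n| := by rw [Real.dist_eq, Real.dist_eq]
      _ ≤ C₀ * Real.exp (-α * n) * (b - a) + C₀ * Real.exp (-α * n) * (b - a) :=
          add_le_add (hkey' y hy n) (hkey' z hz n)
      _ = 2 * C₀ * Real.exp (-α * n) * (b - a) := by ring
end

section
/- Let X be a nonempty compact metric space, E ⊆ C(X,ℝ) a linear subspace, and f ∈ C(X,ℝ). Suppose that every Borel probability measure μ on X annihilating E satisfies ∫ f dμ ≥ 0. Then for every ε > 0 there exists g ∈ E such that f(x) − g(x) ≥ −ε for all x ∈ X. -/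
/-! If no `g ∈ E` satisfies `f - g ≥ -ε`, the open convex set `{h | -ε < h}` misses the affine
subspace `f - E`. A Hahn–Banach separating functional then vanishes on `E`, is nonpositive on
nonnegative functions and positive at `f`; normalised by its value at `1` it becomes a positive
functional `Λ` with `Λ 1 = 1`, `Λ ⟂ E` and `Λ f < 0`. By the Riesz–Markov–Kakutani theorem `Λ` is
integration against a probability measure, which contradicts the hypothesis on `f`. -/

open MeasureTheory CompactlySupported Pointwise

namespace LinearMap

variable {𝕜 M : Type*} [Field 𝕜] [LinearOrder 𝕜] [IsStrictOrderedRing 𝕜] [AddCommGroup M]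
  [Module 𝕜 M] (φ : M →ₗ[𝕜] 𝕜)

theorem map_nonpos_of_forall_smul_lt {a : M} {u : 𝕜} (h : ∀ c : 𝕜, 0 < c → φ (c • a) < u) :
    φ a ≤ 0 := by
  by_contra! ha
  have := h ((|u| + 1) / φ a) (by positivity)
  rw [map_smul, smul_eq_mul, div_mul_cancel₀ _ ha.ne'] at this
  linarith [le_abs_self u]

theorem map_eq_zero_of_forall_mem_le {E : Submodule 𝕜 M} {u : 𝕜} (h : ∀ g ∈ E, φ g ≤ u)
    {g : M} (hg : g ∈ E) : φ g = 0 := by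
  have bound (g) (hg : g ∈ E) : φ g ≤ 0 :=
    φ.map_nonpos_of_forall_smul_lt (u := u + 1) fun c _ ↦
      (h _ (E.smul_mem c hg)).trans_lt (by linarith)
  have := bound _ (E.neg_mem hg)
  rw [map_neg] at this
  linarith [bound g hg]

end LinearMap

namespace ContinuousMap

variable {X : Type*} [TopologicalSpace X]

theorem isOpen_setOf_forall_lt [CompactSpace X] {β : Type*} [TopologicalSpace β]
    [LinearOrder β] [ClosedIicTopology β] (a : β) : IsOpen {h : C(X, β) | ∀ x, a < h x} := by
  simpa [Set.MapsTo] using isOpen_setOfPred_mapsTo isCompact_univ (isOpen_Ioi (a := a))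

theorem convex_setOf_forall_lt (a : ℝ) : Convex ℝ {h : C(X, ℝ) | ∀ x, a < h x} := by
  simp only [Set.ofPred_forall]
  exact convex_iInter fun x ↦ convex_halfSpace_gt (evalCLM ℝ x).isLinear a

theorem exists_isProbabilityMeasure_integral_eq [T2Space X] [CompactSpace X]
    [MeasurableSpace X] [BorelSpace X]
    (Λ : C(X, ℝ) →ₚ[ℝ] ℝ) (hΛ : Λ 1 = 1) :
    ∃ μ : Measure X, IsProbabilityMeasure μ ∧ ∀ g : C(X, ℝ), ∫ x, g x ∂μ = Λ g := by
  let Λc : C_c(X, ℝ) →ₚ[ℝ] ℝ :=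
    { toFun g := Λ g.toContinuousMap
      map_add' _ _ := map_add Λ _ _
      map_smul' _ _ := map_smul Λ _ _
      monotone' _ _ h := Λ.monotone' h }
  have hint (g : C(X, ℝ)) : ∫ x, g x ∂(RealRMK.rieszMeasure Λc) = Λ g :=
    RealRMK.integral_rieszMeasure Λc (CompactlySupportedContinuousMap.continuousMapEquiv g)
  refine ⟨RealRMK.rieszMeasure Λc, isProbabilityMeasure_iff_real.mpr ?_, hint⟩
  simpa [hΛ] using hint 1

theorem exists_positive_functional_of_forall_exists_lt [CompactSpace X]
    (E : Submodule ℝ C(X, ℝ)) (f : C(X, ℝ)) {ε : ℝ} (hε : 0 < ε)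
    (h : ∀ g ∈ E, ∃ x, f x - g x < -ε) :
    ∃ Λ : C(X, ℝ) →ₚ[ℝ] ℝ, Λ 1 = 1 ∧ (∀ g ∈ E, Λ g = 0) ∧ Λ f < 0 := by
  have hdisj : Disjoint {a : C(X, ℝ) | ∀ x, -ε < a x} ({f} - (E : Set C(X, ℝ))) := by
    rw [Set.singleton_sub, Set.disjoint_left]
    rintro _ ha ⟨g, hg, rfl⟩
    obtain ⟨x, hx⟩ := h g hg
    exact (ha x).not_gt hx
  obtain ⟨φ, u, hlt, hle⟩ := geometric_hahn_banach_open (convex_setOf_forall_lt _)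
    (isOpen_setOf_forall_lt _) ((convex_singleton f).sub E.convex) hdisj
  replace hle (g : C(X, ℝ)) (hg : g ∈ E) : u ≤ φ f - φ g := by
    simpa using hle (f - g) (Set.sub_mem_sub rfl hg)
  have hE (g : C(X, ℝ)) (hg : g ∈ E) : φ g = 0 :=
    φ.toLinearMap.map_eq_zero_of_forall_mem_le (u := φ f - u)
      (fun g hg ↦ by rw [ContinuousLinearMap.coe_coe]; linarith [hle g hg]) hg
  have hpos (a : C(X, ℝ)) (ha : 0 ≤ a) : φ a ≤ 0 :=
    φ.toLinearMap.map_nonpos_of_forall_smul_lt fun c hc ↦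
      hlt _ fun x ↦ (neg_neg_of_pos hε).trans_le (mul_nonneg hc.le (ha x))
  have hu : 0 < u := by simpa using hlt 0 fun x ↦ by simpa using hε
  have hf : u ≤ φ f := by simpa using hle 0 E.zero_mem
  have h1 : φ 1 < 0 := by
    refine (hpos 1 zero_le_one).lt_of_ne fun h1 ↦ ?_
    -- `φ 1 = 0` would force `φ f ≤ 0`, since `0 ≤ f + ‖f‖ • 1`
    have := hpos (f + ‖f‖ • 1) fun x ↦ by
      simpa [neg_le_iff_add_nonneg] using
        (neg_abs_le (f x)).trans' (neg_le_neg (f.norm_coe_le_norm x))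
    simp [h1] at this
    linarith
  refine ⟨.mk₀ ((φ 1)⁻¹ • φ.toLinearMap) fun a ha ↦ ?_, ?_, fun g hg ↦ ?_, ?_⟩
  · simpa using mul_nonneg_of_nonpos_of_nonpos (inv_nonpos.2 h1.le) (hpos a ha)
  · exact inv_mul_cancel₀ h1.ne
  · exact mul_eq_zero_of_right _ (hE g hg)
  · exact mul_neg_of_neg_of_pos (inv_lt_zero.2 h1) (hu.trans_le hf)

end ContinuousMap

theorem hahn_banach_approximation_general
    {X : Type*} [MetricSpace X] [CompactSpace X]
    [MeasurableSpace X] [BorelSpace X]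
    (E : Submodule ℝ C(X, ℝ)) (f : C(X, ℝ))
    (hpos : ∀ μ : Measure X, IsProbabilityMeasure μ →
      (∀ g ∈ E, ∫ x, g x ∂μ = 0) → 0 ≤ ∫ x, f x ∂μ) :
    ∀ ε > (0 : ℝ), ∃ g ∈ E, ∀ x : X, f x - g x ≥ -ε := by
  intro ε hε
  by_contra! h
  obtain ⟨Λ, hΛ1, hΛE, hΛf⟩ :=
    ContinuousMap.exists_positive_functional_of_forall_exists_lt E f hε h
  obtain ⟨μ, hμ, hμΛ⟩ := ContinuousMap.exists_isProbabilityMeasure_integral_eq Λ hΛ1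
  have := hpos μ hμ fun g hg ↦ (hμΛ g).trans (hΛE g hg)
  linarith [hμΛ f]

/-- Hahn–Banach approximation lemma (Ghys/Sullivan, Lemma 3.3 of
Deroin–Kleptsyn): if `X` is a nonempty compact metric space, `E` a linear
subspace of `C(X, ℝ)` and `f ∈ C(X, ℝ)` is such that `∫ f dμ ≥ 0` for every
Borel probability measure `μ` annihilating `E`, then for every `ε > 0` there
is `g ∈ E` with `f - g ≥ -ε` everywhere. -/
theorem hahn_banach_approximation
    {X : Type*} [MetricSpace X] [CompactSpace X] [Nonempty X]
    [MeasurableSpace X] [BorelSpace X]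
    (E : Submodule ℝ C(X, ℝ)) (f : C(X, ℝ))
    (hpos : ∀ μ : Measure X, IsProbabilityMeasure μ →
      (∀ g ∈ E, ∫ x, g x ∂μ = 0) → 0 ≤ ∫ x, f x ∂μ) :
    ∀ ε > (0 : ℝ), ∃ g ∈ E, ∀ x : X, f x - g x ≥ -ε :=
  hahn_banach_approximation_general E f hpos
end

section
/- Let D be a Markov–Feller operator on a nonempty compact metric space X, and suppose μ is the unique D-invariant Borel probability measure on X. Then for every f ∈ C(X,ℝ) the Cesàro averages (1/n)·Σ_{k=0}^{n−1} D^k f converge uniformly on X, as n → ∞, to the constant function ∫ f dμ. -/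
set_option linter.unusedSectionVars false
set_option linter.unusedVariables false

open MeasureTheory Filter Set Topology

noncomputable section

namespace CesaroRMK

variable {X : Type*} [MetricSpace X] [CompactSpace X]
  [MeasurableSpace X] [BorelSpace X]

variable (Λ : C(X, ℝ) →ₗ[ℝ] ℝ)

/-- A test function for a set `K`: nonnegative, and at least `1` on `K`. -/
def IsTest (K : Set X) (f : C(X, ℝ)) : Prop :=
  (∀ x, 0 ≤ f x) ∧ ∀ x ∈ K, 1 ≤ f x

/-- The (real-valued) Riesz content of a set. -/
def cR (K : Set X) : ℝ := sInf (Λ '' {f | IsTest K f})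

variable {Λ}

lemma isTest_one (K : Set X) : IsTest K (1 : C(X, ℝ)) :=
  ⟨fun x => by simp, fun x _ => by simp⟩

lemma testImage_nonempty (K : Set X) : (Λ '' {f | IsTest K f}).Nonempty :=
  ⟨Λ 1, 1, isTest_one K, rfl⟩

section pos

variable (hpos : ∀ f : C(X, ℝ), (∀ x, 0 ≤ f x) → 0 ≤ Λ f)

lemma lin_mono (hpos : ∀ f : C(X, ℝ), (∀ x, 0 ≤ f x) → 0 ≤ Λ f)
    {f g : C(X, ℝ)} (h : ∀ x, f x ≤ g x) : Λ f ≤ Λ g := by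
  have h0 : 0 ≤ Λ (g - f) := hpos _ (fun x => by simpa using sub_nonneg.2 (h x))
  rw [map_sub] at h0; linarith

include hpos

lemma testImage_bddBelow (K : Set X) : BddBelow (Λ '' {f | IsTest K f}) := by
  refine ⟨0, fun r hr => ?_⟩
  obtain ⟨f, hf, rfl⟩ := hr
  exact hpos f hf.1

lemma cR_le_test {K : Set X} {f : C(X, ℝ)} (hf : IsTest K f) : cR Λ K ≤ Λ f :=
  csInf_le (testImage_bddBelow hpos K) ⟨f, hf, rfl⟩

lemma le_cR {K : Set X} {r : ℝ} (h : ∀ f : C(X, ℝ), IsTest K f → r ≤ Λ f) :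
    r ≤ cR Λ K :=
  le_csInf (testImage_nonempty K) (by rintro b ⟨f, hf, rfl⟩; exact h f hf)

lemma cR_nonneg (K : Set X) : 0 ≤ cR Λ K :=
  le_cR hpos (fun f hf => hpos f hf.1)

lemma cR_mono {K₁ K₂ : Set X} (h : K₁ ⊆ K₂) : cR Λ K₁ ≤ cR Λ K₂ :=
  csInf_le_csInf (testImage_bddBelow hpos K₁) (testImage_nonempty K₂)
    (image_mono (fun f hf => ⟨hf.1, fun x hx => hf.2 x (h hx)⟩))

lemma exists_test_lt (K : Set X) {ε : ℝ} (hε : 0 < ε) :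
    ∃ f : C(X, ℝ), IsTest K f ∧ Λ f < cR Λ K + ε := by
  obtain ⟨a, ⟨f, hf, rfl⟩, ha⟩ := Real.lt_sInf_add_pos (testImage_nonempty K) hε
  exact ⟨f, hf, ha⟩

variable (hone : Λ 1 = 1)
include hone

lemma cR_le_one (K : Set X) : cR Λ K ≤ 1 := by
  have := cR_le_test hpos (isTest_one K)
  rwa [hone] at this

lemma cR_univ : cR Λ (univ : Set X) = 1 := by
  refine le_antisymm (cR_le_one hpos hone _) (le_cR hpos fun f hf => ?_)
  have : Λ 1 ≤ Λ f := lin_mono hpos (fun x => by simpa using hf.2 x (mem_univ x))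
  rwa [hone] at this

omit hone in
lemma cR_sup_le (K₁ K₂ : Set X) : cR Λ (K₁ ∪ K₂) ≤ cR Λ K₁ + cR Λ K₂ := by
  refine le_of_forall_pos_le_add (fun ε hε => ?_)
  obtain ⟨f₁, hf₁, hΛ₁⟩ := exists_test_lt hpos K₁ (half_pos hε)
  obtain ⟨f₂, hf₂, hΛ₂⟩ := exists_test_lt hpos K₂ (half_pos hε)
  have htest : IsTest (K₁ ∪ K₂) (f₁ + f₂) := by
    constructor
    · intro x; have := hf₁.1 x; have := hf₂.1 x; simp only [ContinuousMap.add_apply]; linarith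
    · rintro x (hx | hx)
      · have := hf₁.2 x hx; have := hf₂.1 x; simp only [ContinuousMap.add_apply]; linarith
      · have := hf₂.2 x hx; have := hf₁.1 x; simp only [ContinuousMap.add_apply]; linarith
  have := cR_le_test hpos htest
  rw [map_add] at this
  linarith

omit hone in
lemma le_cR_union {K₁ K₂ : Set X} (h₁ : IsClosed K₁) (h₂ : IsClosed K₂)
    (hd : Disjoint K₁ K₂) : cR Λ K₁ + cR Λ K₂ ≤ cR Λ (K₁ ∪ K₂) := by
  obtain ⟨u, hu0, hu1, hu01⟩ := exists_continuous_zero_one_of_isClosed h₁ h₂ hd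
  refine le_cR hpos (fun f hf => ?_)
  have htest₁ : IsTest K₁ (f * (1 - u)) := by
    constructor
    · intro x
      have := (hu01 x).2; have := hf.1 x
      simp only [ContinuousMap.mul_apply, ContinuousMap.sub_apply, ContinuousMap.one_apply]
      nlinarith
    · intro x hx
      have h0 : u x = 0 := hu0 hx
      have := hf.2 x (Or.inl hx)
      simp only [ContinuousMap.mul_apply, ContinuousMap.sub_apply, ContinuousMap.one_apply, h0]
      linarith
  have htest₂ : IsTest K₂ (f * u) := by
    constructor
    · intro x
      have := (hu01 x).1; have := hf.1 x
      simp only [ContinuousMap.mul_apply]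
      nlinarith
    · intro x hx
      have h1 : u x = 1 := hu1 hx
      have := hf.2 x (Or.inr hx)
      simp only [ContinuousMap.mul_apply, h1]
      linarith
  have hsum : f * (1 - u) + f * u = f := by ring
  have := add_le_add (cR_le_test hpos htest₁) (cR_le_test hpos htest₂)
  rw [← map_add, hsum] at this
  exact this

omit hone in
/-- The Riesz content as a `MeasureTheory.Content`. -/
def rieszContent : Content X where
  toFun K := Real.toNNReal (cR Λ (K : Set X))
  mono' K₁ K₂ h := Real.toNNReal_le_toNNReal (cR_mono hpos h)
  sup_le' K₁ K₂ := by
    refine le_trans (Real.toNNReal_le_toNNReal (cR_sup_le hpos K₁ K₂)) ?_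
    exact Real.toNNReal_add_le
  sup_disjoint' K₁ K₂ hd h₁ h₂ := by
    refine le_antisymm
      (le_trans (Real.toNNReal_le_toNNReal (cR_sup_le hpos K₁ K₂)) Real.toNNReal_add_le) ?_
    rw [← Real.toNNReal_add (cR_nonneg hpos _) (cR_nonneg hpos _)]
    exact Real.toNNReal_le_toNNReal (le_cR_union hpos h₁ h₂ hd)


omit hone in
/-- The Riesz measure associated to a positive normalized linear functional. -/
def rieszMeasure : Measure X := (rieszContent hpos).measure

omit hone in
lemma rieszMeasure_open {S : Set X} (hS : IsOpen S) :
    rieszMeasure hpos S = (rieszContent hpos).innerContent ⟨S, hS⟩ := by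
  rw [rieszMeasure, Content.measure_apply _ hS.measurableSet,
    Content.outerMeasure_of_isOpen _ S hS]

omit hone in
lemma rieszMeasure_open_le {S T : Set X} (hS : IsOpen S)
    (hT : IsClosed T) (hST : S ⊆ T) :
    rieszMeasure hpos S ≤ ENNReal.ofReal (cR Λ T) := by
  rw [rieszMeasure_open hpos hS]
  have := Content.innerContent_le (rieszContent hpos) ⟨S, hS⟩ ⟨T, hT.isCompact⟩ hST
  refine this.trans (le_of_eq ?_)
  rfl

omit hone in
lemma le_rieszMeasure_open {K S : Set X} (hK : IsClosed K)
    (hS : IsOpen S) (hKS : K ⊆ S) :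
    ENNReal.ofReal (cR Λ K) ≤ rieszMeasure hpos S := by
  rw [rieszMeasure_open hpos hS]
  exact Content.le_innerContent (rieszContent hpos) ⟨K, hK.isCompact⟩ ⟨S, hS⟩ hKS

lemma rieszMeasure_univ :
    rieszMeasure hpos (univ : Set X) = 1 := by
  refine le_antisymm ?_ ?_
  · have := rieszMeasure_open_le hpos isOpen_univ isClosed_univ (le_refl _)
    rwa [cR_univ hpos hone, ENNReal.ofReal_one] at this
  · have := le_rieszMeasure_open hpos isClosed_univ isOpen_univ (le_refl _)
    rwa [cR_univ hpos hone, ENNReal.ofReal_one] at this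

lemma isProbability_rieszMeasure : IsProbabilityMeasure (rieszMeasure hpos) :=
  ⟨rieszMeasure_univ hpos hone⟩


omit hpos hone in
lemma integrable_cm (ν : Measure X) [IsFiniteMeasure ν] (g : C(X, ℝ)) :
    Integrable (fun x => g x) ν :=
  (map_continuous g).integrable_of_hasCompactSupport ((isClosed_tsupport _).isCompact)

omit hone in
lemma clamp_facts {t c δ : ℝ} (hδ : 0 < δ) :
    0 ≤ min t (c + δ) - min t c ∧ min t (c + δ) - min t c ≤ δ ∧
      (t ≤ c → min t (c + δ) - min t c = 0) ∧ (c + δ ≤ t → min t (c + δ) - min t c = δ) := by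
  rcases le_total t c with h1 | h1 <;> rcases le_total t (c + δ) with h2 | h2 <;>
    refine ⟨?_, ?_, fun h3 => ?_, fun h4 => ?_⟩ <;>
    simp only [min_eq_left, min_eq_right, h1, h2] <;> linarith

lemma rieszMeasure_integral_eq_of_nonneg {g : C(X, ℝ)} (hg : ∀ x, 0 ≤ g x) :
    ∫ x, g x ∂(rieszMeasure hpos) = Λ g := by
  set ν := rieszMeasure hpos with hνdef
  haveI hPM : IsProbabilityMeasure ν := isProbability_rieszMeasure hpos hone
  have key : ∀ δ : ℝ, 0 < δ → |Λ g - ∫ x, g x ∂ν| ≤ 2 * δ := by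
    intro δ hδ
    set N : ℕ := ⌈‖g‖ / δ⌉₊ + 1 with hNdef
    have hgN : ∀ x, g x ≤ (N : ℝ) * δ := by
      intro x
      have h1 : g x ≤ ‖g‖ := (abs_le.1 (g.norm_coe_le_norm x)).2
      have h2 : ‖g‖ / δ ≤ (⌈‖g‖ / δ⌉₊ : ℝ) := Nat.le_ceil _
      have h3 : ‖g‖ ≤ (⌈‖g‖ / δ⌉₊ : ℝ) * δ := (div_le_iff₀ hδ).1 h2
      have h4 : ((N : ℝ)) = (⌈‖g‖ / δ⌉₊ : ℝ) + 1 := by rw [hNdef]; push_cast; ring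
      nlinarith
    have hSc : ∀ t : ℝ, IsClosed {x : X | t ≤ g x} := fun t =>
      isClosed_le continuous_const (map_continuous g)
    have hSo : ∀ t : ℝ, IsOpen {x : X | t < g x} := fun t =>
      isOpen_lt continuous_const (map_continuous g)
    set a : ℕ → ℝ := fun i => cR Λ {x : X | (i : ℝ) * δ ≤ g x} with ha
    set b : ℕ → ℝ := fun i => (ν {x : X | (i : ℝ) * δ < g x}).toReal with hb
    have hanonneg : ∀ i, 0 ≤ a i := fun i => cR_nonneg hpos _
    have ha1 : ∀ i, a i ≤ 1 := fun i => cR_le_one hpos hone _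
    have hamono : ∀ i j : ℕ, i ≤ j → a j ≤ a i := by
      intro i j hij
      refine cR_mono hpos (fun x hx => ?_)
      simp only [mem_setOf_eq] at hx ⊢
      have : (i : ℝ) ≤ (j : ℝ) := by exact_mod_cast hij
      nlinarith
    have hba : ∀ i, b i ≤ a i := by
      intro i
      have h1 := rieszMeasure_open_le hpos (hSo ((i : ℝ) * δ)) (hSc ((i : ℝ) * δ))
        (fun x hx => le_of_lt (by simpa using hx))
      have h2 := ENNReal.toReal_mono ENNReal.ofReal_ne_top h1
      rwa [ENNReal.toReal_ofReal (cR_nonneg hpos _)] at h2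
    have hab : ∀ i, a (i + 1) ≤ b i := by
      intro i
      have hsub : {x : X | ((i + 1 : ℕ) : ℝ) * δ ≤ g x} ⊆ {x : X | (i : ℝ) * δ < g x} := by
        intro x hx
        simp only [mem_setOf_eq] at hx ⊢
        have : ((i + 1 : ℕ) : ℝ) = (i : ℝ) + 1 := by push_cast; ring
        nlinarith
      have h1 := le_rieszMeasure_open hpos (hSc _) (hSo _) hsub
      have h2 := ENNReal.toReal_mono (measure_ne_top ν _) h1
      rwa [ENNReal.toReal_ofReal (cR_nonneg hpos _)] at h2
    set F : ℕ → C(X, ℝ) := fun i => g ⊓ ContinuousMap.const X ((i : ℝ) * δ) with hF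
    set h : ℕ → C(X, ℝ) := fun i => F (i + 1) - F i with hh
    have hval : ∀ (i : ℕ) (x : X),
        h i x = min (g x) ((i : ℝ) * δ + δ) - min (g x) ((i : ℝ) * δ) := by
      intro i x
      simp only [hh, hF, ContinuousMap.sub_apply, ContinuousMap.inf_apply,
        ContinuousMap.const_apply]
      have : ((i + 1 : ℕ) : ℝ) * δ = (i : ℝ) * δ + δ := by push_cast; ring
      rw [this]
    have hΛu : ∀ i, Λ (h i) ≤ δ * a i := by
      intro i
      have hdiv : Λ (h i) / δ ≤ a i := by
        refine le_cR hpos (fun f hf => ?_)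
        rw [div_le_iff₀ hδ]
        have hle : ∀ x, h i x ≤ (δ • f) x := by
          intro x
          rw [hval i x, ContinuousMap.smul_apply, smul_eq_mul]
          rcases le_or_gt ((i : ℝ) * δ) (g x) with hx | hx
          · have h1 := hf.2 x hx
            have h2 := (clamp_facts hpos (t := g x) (c := (i : ℝ) * δ) hδ).2.1
            nlinarith
          · have h2 := (clamp_facts hpos (t := g x) (c := (i : ℝ) * δ) hδ).2.2.1 hx.le
            have := hf.1 x
            nlinarith
        have h3 := lin_mono hpos hle
        rw [_root_.map_smul, smul_eq_mul] at h3
        linarith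
      have := (div_le_iff₀ hδ).1 hdiv
      linarith
    have hΛl : ∀ i, δ * a (i + 1) ≤ Λ (h i) := by
      intro i
      have htest : IsTest {x : X | ((i + 1 : ℕ) : ℝ) * δ ≤ g x} (δ⁻¹ • h i) := by
        constructor
        · intro x
          rw [ContinuousMap.smul_apply, smul_eq_mul, hval i x]
          have h1 := (clamp_facts hpos (t := g x) (c := (i : ℝ) * δ) hδ).1
          positivity
        · intro x hx
          simp only [mem_setOf_eq] at hx
          have hcast : ((i + 1 : ℕ) : ℝ) * δ = (i : ℝ) * δ + δ := by push_cast; ring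
          rw [hcast] at hx
          rw [ContinuousMap.smul_apply, smul_eq_mul, hval i x,
            (clamp_facts hpos (t := g x) (c := (i : ℝ) * δ) hδ).2.2.2 hx,
            inv_mul_cancel₀ hδ.ne']
      have h1 := cR_le_test hpos htest
      rw [_root_.map_smul, smul_eq_mul] at h1
      have h2 : a (i + 1) ≤ δ⁻¹ * Λ (h i) := h1
      have h3 : δ * a (i + 1) ≤ δ * (δ⁻¹ * Λ (h i)) := by nlinarith
      rwa [← mul_assoc, mul_inv_cancel₀ hδ.ne', one_mul] at h3
    have hint : ∀ q : C(X, ℝ), Integrable (fun x => q x) ν := fun q => integrable_cm ν q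
    have hIu : ∀ i, ∫ x, h i x ∂ν ≤ δ * b i := by
      intro i
      have hm : MeasurableSet {x : X | (i : ℝ) * δ < g x} := (hSo _).measurableSet
      have hind : Integrable ({x : X | (i : ℝ) * δ < g x}.indicator fun _ => δ) ν :=
        (integrable_const δ).indicator hm
      have hle : ∀ x, h i x ≤ {x : X | (i : ℝ) * δ < g x}.indicator (fun _ => δ) x := by
        intro x
        by_cases hx : x ∈ {x : X | (i : ℝ) * δ < g x}
        · rw [Set.indicator_of_mem hx, hval i x]
          exact (clamp_facts hpos (t := g x) (c := (i : ℝ) * δ) hδ).2.1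
        · rw [Set.indicator_of_notMem hx, hval i x,
            (clamp_facts hpos (t := g x) (c := (i : ℝ) * δ) hδ).2.2.1 (not_lt.1 (by simpa using hx))]
      have h1 := integral_mono (hint (h i)) hind hle
      rwa [integral_indicator_const δ hm, smul_eq_mul, mul_comm] at h1
    have hIl : ∀ i, δ * b (i + 1) ≤ ∫ x, h i x ∂ν := by
      intro i
      have hm : MeasurableSet {x : X | ((i + 1 : ℕ) : ℝ) * δ < g x} := (hSo _).measurableSet
      have hind : Integrable ({x : X | ((i + 1 : ℕ) : ℝ) * δ < g x}.indicator fun _ => δ) ν :=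
        (integrable_const δ).indicator hm
      have hcast : ((i + 1 : ℕ) : ℝ) * δ = (i : ℝ) * δ + δ := by push_cast; ring
      have hle : ∀ x, {x : X | ((i + 1 : ℕ) : ℝ) * δ < g x}.indicator (fun _ => δ) x ≤ h i x := by
        intro x
        by_cases hx : x ∈ {x : X | ((i + 1 : ℕ) : ℝ) * δ < g x}
        · have hx' : ((i + 1 : ℕ) : ℝ) * δ < g x := by simpa using hx
          rw [Set.indicator_of_mem hx, hval i x,
            (clamp_facts hpos (t := g x) (c := (i : ℝ) * δ) hδ).2.2.2 (by rw [← hcast]; exact hx'.le)]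
        · rw [Set.indicator_of_notMem hx, hval i x]
          exact (clamp_facts hpos (t := g x) (c := (i : ℝ) * δ) hδ).1
      have h1 := integral_mono hind (hint (h i)) hle
      rwa [integral_indicator_const δ hm, smul_eq_mul, mul_comm _ δ] at h1
    have hsum : ∑ i ∈ Finset.range N, h i = g := by
      simp only [hh]
      rw [Finset.sum_range_sub F]
      ext x
      simp only [ContinuousMap.sub_apply, hF, ContinuousMap.inf_apply,
        ContinuousMap.const_apply, Nat.cast_zero, zero_mul]
      rw [min_eq_left (hgN x), min_eq_right (hg x), sub_zero]
    have hΛgsum : Λ g = ∑ i ∈ Finset.range N, Λ (h i) := by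
      rw [← hsum, map_sum]
    have hIgsum : ∫ x, g x ∂ν = ∑ i ∈ Finset.range N, ∫ x, h i x ∂ν := by
      rw [← integral_finset_sum _ (fun i _ => hint (h i))]
      congr 1
      ext x
      have hx := congrArg (fun q : C(X, ℝ) => q x) hsum
      rw [← hx]
      exact (map_sum ((Pi.evalAddMonoidHom (fun _ : X => ℝ) x).comp
        (ContinuousMap.coeFnAddMonoidHom)) h (Finset.range N))
    have hterm : ∀ i, |Λ (h i) - ∫ x, h i x ∂ν| ≤ δ * (a i - a (i + 2)) := by
      intro i
      have h1 := hΛu i; have h2 := hΛl i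
      have h3 := hIu i; have h4 := hIl i
      have h5 := hba i; have h6 := hab (i + 1); have h7 := hab i
      have h8 : a (i + 2) ≤ a (i + 1) := hamono _ _ (by omega)
      have e1 : δ * a (i + 2) ≤ δ * b (i + 1) := by nlinarith
      have e2 : δ * b i ≤ δ * a i := by nlinarith
      have e3 : δ * a (i + 2) ≤ δ * a (i + 1) := by nlinarith
      rw [abs_le]
      constructor <;> linarith
    have habs : |Λ g - ∫ x, g x ∂ν| ≤ ∑ i ∈ Finset.range N, |Λ (h i) - ∫ x, h i x ∂ν| := by
      rw [hΛgsum, hIgsum, ← Finset.sum_sub_distrib]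
      exact Finset.abs_sum_le_sum_abs _ _
    have hsum2 : ∑ i ∈ Finset.range N, (δ * (a i - a (i + 2))) ≤ 2 * δ := by
      rw [← Finset.mul_sum]
      have e1 : ∀ i : ℕ, a i - a (i + 2) = (a i - a (i + 1)) + (a (i + 1) - a (i + 2)) := by
        intro i; ring
      have e2 : ∑ i ∈ Finset.range N, (a i - a (i + 2)) = (a 0 - a N) + (a 1 - a (N + 1)) := by
        simp_rw [e1]
        rw [Finset.sum_add_distrib, Finset.sum_range_sub' a,
          Finset.sum_range_sub' (fun i => a (i + 1))]
      rw [e2]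
      have := hanonneg N; have := hanonneg (N + 1); have := ha1 0; have := ha1 1
      nlinarith
    calc |Λ g - ∫ x, g x ∂ν| ≤ ∑ i ∈ Finset.range N, |Λ (h i) - ∫ x, h i x ∂ν| := habs
      _ ≤ ∑ i ∈ Finset.range N, (δ * (a i - a (i + 2))) :=
          Finset.sum_le_sum (fun i _ => hterm i)
      _ ≤ 2 * δ := hsum2
  have hz : |Λ g - ∫ x, g x ∂ν| ≤ 0 := by
    by_contra hlt
    push_neg at hlt
    have := key (|Λ g - ∫ x, g x ∂ν| / 4) (by linarith)
    linarith
  have h0 : Λ g - ∫ x, g x ∂ν = 0 := abs_eq_zero.1 (le_antisymm hz (abs_nonneg _))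
  linarith

lemma rieszMeasure_integral_eq (g : C(X, ℝ)) :
    ∫ x, g x ∂(rieszMeasure hpos) = Λ g := by
  haveI hPM : IsProbabilityMeasure (rieszMeasure hpos) := isProbability_rieszMeasure hpos hone
  set ν := rieszMeasure hpos with hνdef
  have hg' : ∀ x, 0 ≤ (g + ContinuousMap.const X ‖g‖) x := by
    intro x
    have := (abs_le.1 (g.norm_coe_le_norm x)).1
    simp only [ContinuousMap.add_apply, ContinuousMap.const_apply]
    linarith
  have h1 := rieszMeasure_integral_eq_of_nonneg hpos hone hg'
  have h2 : Λ (g + ContinuousMap.const X ‖g‖) = Λ g + ‖g‖ := by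
    have hc : (ContinuousMap.const X ‖g‖) = ‖g‖ • (1 : C(X, ℝ)) := by
      ext x; simp
    rw [map_add, hc, _root_.map_smul, smul_eq_mul, hone, mul_one]
  have h3 : ∫ x, (g + ContinuousMap.const X ‖g‖) x ∂ν = (∫ x, g x ∂ν) + ‖g‖ := by
    simp only [ContinuousMap.add_apply, ContinuousMap.const_apply]
    rw [integral_add (integrable_cm ν g) (integrable_const _), integral_const]
    simp [measure_univ]
  rw [h2, h3] at h1
  linarith

end pos

end CesaroRMK

section MarkovOp

variable {X : Type*} [MetricSpace X] [CompactSpace X]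
variable (D : C(X, ℝ) →ₗ[ℝ] C(X, ℝ))

lemma markov_pow_pos (hDpos : ∀ f : C(X, ℝ), (∀ x, 0 ≤ f x) → ∀ x, 0 ≤ D f x)
    (k : ℕ) (g : C(X, ℝ)) (hg : ∀ x, 0 ≤ g x) : ∀ x, 0 ≤ (D ^ k) g x := by
  induction k with
  | zero => simpa [pow_zero, Module.End.one_apply] using hg
  | succ k ih =>
    intro x
    simp only [pow_succ', Module.End.mul_apply]
    exact hDpos _ ih x

lemma markov_mono (hDpos : ∀ f : C(X, ℝ), (∀ x, 0 ≤ f x) → ∀ x, 0 ≤ D f x)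
    {f g : C(X, ℝ)} (h : ∀ x, f x ≤ g x) : ∀ x, D f x ≤ D g x := by
  intro x
  have h0 := hDpos (g - f) (fun y => by simpa using sub_nonneg.2 (h y)) x
  rw [map_sub, ContinuousMap.sub_apply] at h0
  linarith

lemma markov_bound (hDpos : ∀ f : C(X, ℝ), (∀ x, 0 ≤ f x) → ∀ x, 0 ≤ D f x)
    (hD1 : D 1 = 1) {g : C(X, ℝ)} {C : ℝ} (hC : ∀ x, |g x| ≤ C) :
    ∀ x, |D g x| ≤ C := by
  intro x
  have hu : ∀ y, g y ≤ (C • (1 : C(X, ℝ))) y := fun y => by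
    simpa using (abs_le.1 (hC y)).2
  have hl : ∀ y, ((-C) • (1 : C(X, ℝ))) y ≤ g y := fun y => by
    simpa using (abs_le.1 (hC y)).1
  have h1 := markov_mono D hDpos hu x
  have h2 := markov_mono D hDpos hl x
  rw [_root_.map_smul, hD1] at h1 h2
  simp only [ContinuousMap.smul_apply, ContinuousMap.one_apply, smul_eq_mul, mul_one] at h1 h2
  rw [abs_le]
  exact ⟨by linarith, h1⟩

lemma markov_pow_bound (hDpos : ∀ f : C(X, ℝ), (∀ x, 0 ≤ f x) → ∀ x, 0 ≤ D f x)
    (hD1 : D 1 = 1) (k : ℕ) (g : C(X, ℝ)) : ∀ x, |(D ^ k) g x| ≤ ‖g‖ := by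
  induction k with
  | zero =>
    intro x
    have := g.norm_coe_le_norm x
    rw [Real.norm_eq_abs] at this
    simpa [Module.End.one_apply] using this
  | succ k ih =>
    have := markov_bound D hDpos hD1 ih
    intro x
    simpa only [pow_succ', Module.End.mul_apply] using this x

lemma markov_pow_one (hD1 : D 1 = 1) (k : ℕ) : (D ^ k) (1 : C(X, ℝ)) = 1 := by
  induction k with
  | zero => simp [Module.End.one_apply]
  | succ k ih => simp only [pow_succ', Module.End.mul_apply, ih, hD1]

end MarkovOp

end


/-- Unique ergodicity implies uniform convergence of Cesàro averages: if `D`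
is a Markov–Feller operator on a nonempty compact metric space `X` and `μ` is
its unique invariant Borel probability measure, then for every `f ∈ C(X, ℝ)`
the averages `(1/n) Σ_{k<n} D^k f` converge uniformly on `X` to the constant
`∫ f dμ`. -/
theorem cesaro_averages_tendstoUniformly_of_unique_invariant
    {X : Type*} [MetricSpace X] [CompactSpace X] [Nonempty X]
    [MeasurableSpace X] [BorelSpace X]
    (D : C(X, ℝ) →ₗ[ℝ] C(X, ℝ))
    (hDpos : ∀ f : C(X, ℝ), (∀ x, 0 ≤ f x) → ∀ x, 0 ≤ D f x)
    (hD1 : D 1 = 1)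
    (μ : Measure X) (hμ : IsProbabilityMeasure μ)
    (hinv : ∀ f : C(X, ℝ), ∫ x, D f x ∂μ = ∫ x, f x ∂μ)
    (huniq : ∀ ν : Measure X, IsProbabilityMeasure ν →
      (∀ f : C(X, ℝ), ∫ x, D f x ∂ν = ∫ x, f x ∂ν) → ν = μ) :
    ∀ f : C(X, ℝ),
      TendstoUniformly
        (fun (n : ℕ) (x : X) =>
          (1 / (n : ℝ)) * ∑ k ∈ Finset.range n, (D ^ k) f x)
        (fun _ : X => ∫ x, f x ∂μ) atTop := by
  intro f
  by_contra hcontra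
  set c : ℝ := ∫ x, f x ∂μ with hc
  rw [Metric.tendstoUniformly_iff] at hcontra
  simp only [not_forall, not_eventually, not_lt, not_exists, exists_prop] at hcontra
  obtain ⟨ε, hε, hfreq⟩ := hcontra
  have hsel : ∀ j : ℕ, ∃ m : ℕ, j + 1 ≤ m ∧ ∃ x : X,
      ε ≤ dist c ((1 / (m : ℝ)) * ∑ k ∈ Finset.range m, (D ^ k) f x) := by
    intro j
    obtain ⟨m, hm1, x, hm2⟩ := Filter.frequently_atTop.1 hfreq (j + 1)
    exact ⟨m, hm1, x, hm2⟩
  choose n hnge xs hxs using hsel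
  have hnpos : ∀ j, 0 < n j := fun j => lt_of_lt_of_le (Nat.succ_pos j) (hnge j)
  have hnR : ∀ j, (0 : ℝ) < (n j : ℝ) := fun j => by exact_mod_cast hnpos j
  set φ : ℕ → C(X, ℝ) → ℝ :=
    fun j g => (1 / (n j : ℝ)) * ∑ k ∈ Finset.range (n j), (D ^ k) g (xs j) with hφ
  have hφ_bound : ∀ j (g : C(X, ℝ)), |φ j g| ≤ ‖g‖ := by
    intro j g
    have h1 : |∑ k ∈ Finset.range (n j), (D ^ k) g (xs j)| ≤ (n j : ℝ) * ‖g‖ := by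
      refine (Finset.abs_sum_le_sum_abs _ _).trans ?_
      have h2 := Finset.sum_le_sum
        (fun k (_ : k ∈ Finset.range (n j)) => markov_pow_bound D hDpos hD1 k g (xs j))
      simpa [Finset.sum_const, Finset.card_range, nsmul_eq_mul] using h2
    have h3 : (0:ℝ) ≤ 1 / (n j : ℝ) := by positivity
    rw [hφ, abs_mul, abs_of_nonneg h3]
    have h4 := mul_le_mul_of_nonneg_left h1 h3
    have h5 : (1 / (n j : ℝ)) * ((n j : ℝ) * ‖g‖) = ‖g‖ := by
      field_simp
      rw [mul_comm ((n j : ℝ)) ‖g‖, mul_div_assoc, div_self (hnR j).ne', mul_one]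
    linarith
  obtain ⟨U, hU⟩ := Filter.exists_ultrafilter_le (atTop : Filter ℕ)
  have hlim : ∀ g : C(X, ℝ), ∃ L : ℝ, Tendsto (fun j => φ j g) (↑U) (𝓝 L) := by
    intro g
    have hcp : IsCompact (Set.Icc (-‖g‖) ‖g‖) := isCompact_Icc
    have hmem : ∀ j, φ j g ∈ Set.Icc (-‖g‖) ‖g‖ := by
      intro j
      have := abs_le.1 (hφ_bound j g)
      exact ⟨this.1, this.2⟩
    obtain ⟨L, _, hL⟩ := hcp.ultrafilter_le_nhds (U.map fun j => φ j g)
      (le_principal_iff.2 (Filter.mem_map.2 (Filter.univ_mem' hmem)))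
    exact ⟨L, hL⟩
  choose Lam hLam using hlim
  have hφ_add : ∀ j (g h : C(X, ℝ)), φ j (g + h) = φ j g + φ j h := by
    intro j g h
    simp only [hφ, map_add, ContinuousMap.add_apply, Finset.sum_add_distrib, mul_add]
  have hφ_smul : ∀ j (r : ℝ) (g : C(X, ℝ)), φ j (r • g) = r * φ j g := by
    intro j r g
    simp only [hφ, _root_.map_smul, ContinuousMap.smul_apply, smul_eq_mul, ← Finset.mul_sum]
    ring
  set Λ : C(X, ℝ) →ₗ[ℝ] ℝ :=
    { toFun := Lam
      map_add' := by
        intro g h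
        refine tendsto_nhds_unique (hLam (g + h)) ?_
        have := (hLam g).add (hLam h)
        simpa only [hφ_add] using this
      map_smul' := by
        intro r g
        refine tendsto_nhds_unique (hLam (r • g)) ?_
        have := (hLam g).const_mul r
        simp only [RingHom.id_apply, smul_eq_mul]
        simpa only [hφ_smul] using this } with hΛdef
  have hpos' : ∀ g : C(X, ℝ), (∀ x, 0 ≤ g x) → 0 ≤ Λ g := by
    intro g hg
    refine ge_of_tendsto (hLam g) (Filter.Eventually.of_forall fun j => ?_)
    have h1 : (0:ℝ) ≤ 1 / (n j : ℝ) := by positivity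
    have h2 : 0 ≤ ∑ k ∈ Finset.range (n j), (D ^ k) g (xs j) :=
      Finset.sum_nonneg fun k _ => markov_pow_pos D hDpos k g hg (xs j)
    exact mul_nonneg h1 h2
  have hone' : Λ (1 : C(X, ℝ)) = 1 := by
    refine tendsto_nhds_unique (hLam 1) ?_
    have h1 : ∀ j, φ j (1 : C(X, ℝ)) = 1 := by
      intro j
      simp only [hφ, markov_pow_one D hD1, ContinuousMap.one_apply, Finset.sum_const,
        Finset.card_range, nsmul_eq_mul, mul_one]
      field_simp
      exact div_self (hnR j).ne'
    simp only [h1]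
    exact tendsto_const_nhds
  have hinvΛ : ∀ g : C(X, ℝ), Λ (D g) = Λ g := by
    intro g
    have hkey : ∀ j, φ j (D g) - φ j g =
        (1 / (n j : ℝ)) * ((D ^ (n j)) g (xs j) - g (xs j)) := by
      intro j
      have h1 : ∀ k : ℕ, ((D ^ k) (D g)) (xs j) = ((D ^ (k + 1)) g) (xs j) := by
        intro k
        rw [pow_succ, Module.End.mul_apply]
      have h2 := Finset.sum_range_succ' (fun k => ((D ^ k) g) (xs j)) (n j)
      have h3 := Finset.sum_range_succ (fun k => ((D ^ k) g) (xs j)) (n j)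
      simp only [hφ, h1]
      have h4 : ∑ k ∈ Finset.range (n j), ((D ^ (k + 1)) g) (xs j)
          = ∑ k ∈ Finset.range (n j), ((D ^ k) g) (xs j)
            + ((D ^ (n j)) g) (xs j) - ((D ^ 0) g) (xs j) := by
        rw [h3] at h2
        linarith [h2]
      rw [h4]
      simp only [pow_zero, Module.End.one_apply]
      ring
    have hto0 : Tendsto (fun j => φ j (D g) - φ j g) (↑U) (𝓝 0) := by
      refine Tendsto.mono_left ?_ hU
      have hb : ∀ j, ‖φ j (D g) - φ j g‖ ≤ 2 * ‖g‖ / ((j : ℝ) + 1) := by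
        intro j
        rw [Real.norm_eq_abs, hkey j]
        have h1 : |(D ^ (n j)) g (xs j) - g (xs j)| ≤ 2 * ‖g‖ := by
          have h2 := markov_pow_bound D hDpos hD1 (n j) g (xs j)
          have h3 := g.norm_coe_le_norm (xs j)
          rw [Real.norm_eq_abs] at h3
          calc |(D ^ (n j)) g (xs j) - g (xs j)|
              ≤ |(D ^ (n j)) g (xs j)| + |g (xs j)| := abs_sub _ _
            _ ≤ 2 * ‖g‖ := by linarith
        have hj1 : (0:ℝ) < (j : ℝ) + 1 := by positivity
        have hjn : (j : ℝ) + 1 ≤ (n j : ℝ) := by exact_mod_cast hnge j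
        have h4 : (1 : ℝ) / (n j : ℝ) ≤ 1 / ((j : ℝ) + 1) :=
          one_div_le_one_div_of_le hj1 hjn
        have h5 : (0:ℝ) ≤ 1 / (n j : ℝ) := by positivity
        rw [abs_mul, abs_of_nonneg h5]
        have h6 : (1 / (n j : ℝ)) * |(D ^ (n j)) g (xs j) - g (xs j)|
            ≤ (1 / ((j : ℝ) + 1)) * (2 * ‖g‖) := by
          apply mul_le_mul h4 h1 (abs_nonneg _) (by positivity)
        calc (1 / (n j : ℝ)) * |(D ^ (n j)) g (xs j) - g (xs j)|
            ≤ (1 / ((j : ℝ) + 1)) * (2 * ‖g‖) := h6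
          _ = 2 * ‖g‖ / ((j : ℝ) + 1) := by ring
      refine squeeze_zero_norm hb ?_
      have h7 := (tendsto_const_div_atTop_nhds_zero_nat (2 * ‖g‖)).comp
        (tendsto_add_atTop_nat 1)
      have h8 : (fun j : ℕ => 2 * ‖g‖ / ((j : ℝ) + 1))
          = (fun m : ℕ => 2 * ‖g‖ / (m : ℝ)) ∘ (fun j : ℕ => j + 1) := by
        funext j
        simp only [Function.comp_apply]
        norm_cast
      rw [h8]
      exact h7
    have h9 := (hLam (D g)).sub (hLam g)
    have h10 := tendsto_nhds_unique h9 hto0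
    have : Λ (D g) - Λ g = 0 := h10
    linarith
  have hεL : ε ≤ dist c (Lam f) := by
    refine ge_of_tendsto (tendsto_const_nhds.dist (hLam f))
      (Filter.Eventually.of_forall fun j => ?_)
    exact hxs j
  set ν : Measure X := CesaroRMK.rieszMeasure (Λ := Λ) hpos' with hνdef
  have hPM : IsProbabilityMeasure ν := CesaroRMK.isProbability_rieszMeasure hpos' hone'
  have hrepr : ∀ g : C(X, ℝ), ∫ x, g x ∂ν = Λ g :=
    fun g => CesaroRMK.rieszMeasure_integral_eq hpos' hone' g
  have hinvν : ∀ g : C(X, ℝ), ∫ x, D g x ∂ν = ∫ x, g x ∂ν := by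
    intro g
    calc ∫ x, (D g) x ∂ν = Λ (D g) := hrepr (D g)
      _ = Λ g := hinvΛ g
      _ = ∫ x, g x ∂ν := (hrepr g).symm
  have hνμ : ν = μ := huniq ν hPM hinvν
  have hLf : Lam f = c := by
    have h1 := hrepr f
    rw [hνμ] at h1
    rw [hc]
    exact h1.symm
  rw [hLf, dist_self] at hεL
  linarith
end
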